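/- arXiv:2509.11212 — 4 statements merged into one kernel-verified Lean document; each statement's English description precedes it below -/
import Mathlib

section
/- Let V be a partially ordered vector space and x, y ∈ V_p. If x and y are disjoint (i.e., the sets {x+y, -(x+y)} and {x-y, y-x} have the same nonempty sets of upper bounds), then x and y are D-disjoint (i.e., [0,x] ∩ [0,y] = {0}). -/
variable {V : Type*} [AddCommGroup V] [PartialOrder V]
  [CovariantClass V V (· + ·) (· ≤ ·)] [Module ℝ V] [PosSMulMono ℝ V]

theorem stmt10 (x y : V) (hx : 0 ≤ x) (hy : 0 ≤ y)
    (hdisj : upperBounds ({x + y, -(x + y)} : Set V) = upperBounds ({x - y, y - x} : Set V))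
    (hne : (upperBounds ({x + y, -(x + y)} : Set V)).Nonempty) :
    Set.Icc 0 x ∩ Set.Icc 0 y = {0} := by
  ext w
  simp only [Set.mem_inter_iff, Set.mem_Icc, Set.mem_singleton_iff]
  constructor
  · rintro ⟨⟨hw0, hwx⟩, -, hwy⟩
    have hu : x + y - (w + w) ∈ upperBounds ({x - y, y - x} : Set V) := by
      rintro z (rfl | hz)
      · have h1 : w + w ≤ y + y := add_le_add hwy hwy
        have h2 := add_le_add_right h1 (x - y - (w + w))
        calc x - y = x - y - (w + w) + (w + w) := by abel
          _ ≤ x - y - (w + w) + (y + y) := h2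
          _ = x + y - (w + w) := by abel
      · rw [Set.mem_singleton_iff] at hz
        subst hz
        have h1 : w + w ≤ x + x := add_le_add hwx hwx
        have h2 := add_le_add_right h1 (y - x - (w + w))
        calc y - x = y - x - (w + w) + (w + w) := by abel
          _ ≤ y - x - (w + w) + (x + x) := h2
          _ = x + y - (w + w) := by abel
    rw [← hdisj] at hu
    have hxy : x + y ≤ x + y - (w + w) := hu (by simp)
    have hww : w + w ≤ 0 := by
      have h2 := add_le_add_right hxy (w + w - (x + y))
      calc w + w = w + w - (x + y) + (x + y) := by abel
        _ ≤ w + w - (x + y) + (x + y - (w + w)) := h2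
        _ = 0 := by abel
    have hle : w ≤ 0 := le_trans (le_add_of_nonneg_left hw0) hww
    exact le_antisymm hle hw0
  · rintro rfl
    exact ⟨⟨le_rfl, hx⟩, le_rfl, hy⟩
end

section
/- In V = ℝ² with positive cone V_p = {(x,y) : x > 0 and y > 0} ∪ {(0,0)}, every nonzero positive element is D-discrete, but V contains no atoms. -/
def pos2 : Set (ℝ × ℝ) := {w | 0 < w.1 ∧ 0 < w.2} ∪ {0}

def le2 (u v : ℝ × ℝ) : Prop := v - u ∈ pos2

lemma le2_pos {u : ℝ × ℝ} (h : le2 0 u) (hne : u ≠ 0) : 0 < u.1 ∧ 0 < u.2 := by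
  rcases h with h | h
  · simpa using h
  · exact absurd (by simpa using h) hne

theorem stmt17 :
    (∀ x : ℝ × ℝ, le2 0 x → x ≠ 0 →
      ¬∃ a b : ℝ × ℝ, a ≠ 0 ∧ b ≠ 0 ∧ le2 0 a ∧ le2 a x ∧ le2 0 b ∧ le2 b x ∧
        (∀ w : ℝ × ℝ, le2 0 w → le2 w a → le2 w b → w = 0)) ∧
    ¬∃ x : ℝ × ℝ, le2 0 x ∧ x ≠ 0 ∧
      ∀ a : ℝ × ℝ, le2 0 a → le2 a x → ∃ α : ℝ, 0 ≤ α ∧ a = α • x := by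
  constructor
  · rintro x _ _ ⟨a, b, ha0, hb0, hpa, _, hpb, _, hdisj⟩
    obtain ⟨ha1, ha2⟩ := le2_pos hpa ha0
    obtain ⟨hb1, hb2⟩ := le2_pos hpb hb0
    set w : ℝ × ℝ := (min a.1 b.1 / 2, min a.2 b.2 / 2) with hw
    have hw1 : 0 < w.1 := by show 0 < min a.1 b.1 / 2; positivity
    have hw2 : 0 < w.2 := by show 0 < min a.2 b.2 / 2; positivity
    have h0w : le2 0 w := Or.inl ⟨by simpa using hw1, by simpa using hw2⟩
    have hwa : le2 w a := Or.inl ⟨by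
        simp only [hw, Prod.fst_sub]
        have : min a.1 b.1 ≤ a.1 := min_le_left _ _
        linarith, by
        simp only [hw, Prod.snd_sub]
        have : min a.2 b.2 ≤ a.2 := min_le_left _ _
        linarith⟩
    have hwb : le2 w b := Or.inl ⟨by
        simp only [hw, Prod.fst_sub]
        have : min a.1 b.1 ≤ b.1 := min_le_right _ _
        linarith, by
        simp only [hw, Prod.snd_sub]
        have : min a.2 b.2 ≤ b.2 := min_le_right _ _
        linarith⟩
    have := hdisj w h0w hwa hwb
    rw [this] at hw1
    simp at hw1
  · rintro ⟨x, hpx, hx0, hatom⟩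
    obtain ⟨hx1, hx2⟩ := le2_pos hpx hx0
    set a : ℝ × ℝ := (x.1 / 2, x.2 / 3) with ha
    have h0a : le2 0 a := Or.inl ⟨by simp [ha]; positivity, by simp [ha]; positivity⟩
    have hax : le2 a x := Or.inl ⟨by simp only [ha, Prod.fst_sub]; linarith,
      by simp only [ha, Prod.snd_sub]; linarith⟩
    obtain ⟨α, _, heq⟩ := hatom a h0a hax
    have h1 : x.1 / 2 = α * x.1 := congrArg Prod.fst heq
    have h2 : x.2 / 3 = α * x.2 := congrArg Prod.snd heq
    have hα1 : α = 1/2 := by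
      field_simp at h1; nlinarith
    have hα2 : α = 1/3 := by
      field_simp at h2; nlinarith
    rw [hα1] at hα2; norm_num at hα2
end

section
/- In V = ℝ³ with positive cone K generated by v₁ = (1,0,1), v₂ = (0,1,1), v₃ = (-1,0,1), v₄ = (0,-1,1) (i.e., K = {c₁v₁+c₂v₂+c₃v₃+c₄v₄ : cₖ ≥ 0}), the elements v₁ and v₂ are nonzero D-disjoint elements satisfying 0 ≤ v₁ ≤ v₁+v₂ and 0 ≤ v₂ ≤ v₁+v₂; in particular x = v₁+v₂ is not D-discrete. -/
def K3 : Set (ℝ × ℝ × ℝ) :=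
  {w | ∃ c₁ c₂ c₃ c₄ : ℝ, 0 ≤ c₁ ∧ 0 ≤ c₂ ∧ 0 ≤ c₃ ∧ 0 ≤ c₄ ∧
    w = c₁ • ((1 : ℝ), (0 : ℝ), (1 : ℝ)) + c₂ • ((0 : ℝ), (1 : ℝ), (1 : ℝ)) +
      c₃ • ((-1 : ℝ), (0 : ℝ), (1 : ℝ)) + c₄ • ((0 : ℝ), (-1 : ℝ), (1 : ℝ))}

def leK (u v : ℝ × ℝ × ℝ) : Prop := v - u ∈ K3

lemma memK3 (x y z : ℝ) : (x, y, z) ∈ K3 ↔ |x| + |y| ≤ z := by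
  constructor
  · rintro ⟨c₁, c₂, c₃, c₄, h1, h2, h3, h4, heq⟩
    have hx : x = c₁ - c₃ := by
      have := congrArg Prod.fst heq
      simp [Prod.smul_def] at this; linarith
    have hy : y = c₂ - c₄ := by
      have := congrArg (fun p => p.2.1) heq
      simp [Prod.smul_def] at this; linarith
    have hz : z = c₁ + c₂ + c₃ + c₄ := by
      have := congrArg (fun p => p.2.2) heq
      simp [Prod.smul_def] at this; linarith
    have hax : |x| ≤ c₁ + c₃ := by
      rw [hx, abs_sub_le_iff]; constructor <;> linarith
    have hay : |y| ≤ c₂ + c₄ := by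
      rw [hy, abs_sub_le_iff]; constructor <;> linarith
    linarith
  · intro h
    have hmx : max x 0 + max (-x) 0 = |x| := by
      rcases le_or_gt 0 x with h' | h'
      · rw [max_eq_left h', max_eq_right (by linarith : -x ≤ 0), abs_of_nonneg h']; ring
      · rw [max_eq_right h'.le, max_eq_left (by linarith : 0 ≤ -x), abs_of_neg h']; ring
    have hmx' : max x 0 - max (-x) 0 = x := by
      rcases le_or_gt 0 x with h' | h'
      · rw [max_eq_left h', max_eq_right (by linarith : -x ≤ 0)]; ring
      · rw [max_eq_right h'.le, max_eq_left (by linarith : 0 ≤ -x)]; ring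
    have hmy : max y 0 + max (-y) 0 = |y| := by
      rcases le_or_gt 0 y with h' | h'
      · rw [max_eq_left h', max_eq_right (by linarith : -y ≤ 0), abs_of_nonneg h']; ring
      · rw [max_eq_right h'.le, max_eq_left (by linarith : 0 ≤ -y), abs_of_neg h']; ring
    have hmy' : max y 0 - max (-y) 0 = y := by
      rcases le_or_gt 0 y with h' | h'
      · rw [max_eq_left h', max_eq_right (by linarith : -y ≤ 0)]; ring
      · rw [max_eq_right h'.le, max_eq_left (by linarith : 0 ≤ -y)]; ring
    refine ⟨max x 0 + (z - |x| - |y|) / 2, max y 0, max (-x) 0 + (z - |x| - |y|) / 2,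
      max (-y) 0, ?_, le_max_right _ _, ?_, le_max_right _ _, ?_⟩
    · have := le_max_right x 0; linarith
    · have := le_max_right (-x) 0; linarith
    · refine Prod.ext ?_ (Prod.ext ?_ ?_) <;> simp [Prod.smul_def] <;> linarith

lemma leK_iff (u v : ℝ × ℝ × ℝ) : leK u v ↔ |v.1 - u.1| + |v.2.1 - u.2.1| ≤ v.2.2 - u.2.2 := by
  unfold leK
  have : v - u = (v.1 - u.1, v.2.1 - u.2.1, v.2.2 - u.2.2) := rfl
  rw [this, memK3]

theorem stmt18 :
    ((1, 0, 1) : ℝ × ℝ × ℝ) ≠ 0 ∧ ((0, 1, 1) : ℝ × ℝ × ℝ) ≠ 0 ∧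
    leK 0 (1, 0, 1) ∧ leK (1, 0, 1) ((1, 0, 1) + (0, 1, 1)) ∧
    leK 0 (0, 1, 1) ∧ leK (0, 1, 1) ((1, 0, 1) + (0, 1, 1)) ∧
    (∀ w : ℝ × ℝ × ℝ, leK 0 w → leK w (1, 0, 1) → leK w (0, 1, 1) → w = 0) ∧
    ¬(((1, 0, 1) + (0, 1, 1) : ℝ × ℝ × ℝ) ≠ 0 ∧
      ¬∃ a b : ℝ × ℝ × ℝ, a ≠ 0 ∧ b ≠ 0 ∧
        leK 0 a ∧ leK a ((1, 0, 1) + (0, 1, 1)) ∧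
        leK 0 b ∧ leK b ((1, 0, 1) + (0, 1, 1)) ∧
        (∀ w : ℝ × ℝ × ℝ, leK 0 w → leK w a → leK w b → w = 0)) := by
  have hdisj : ∀ w : ℝ × ℝ × ℝ, leK 0 w → leK w (1, 0, 1) → leK w (0, 1, 1) → w = 0 := by
    rintro ⟨x, y, z⟩ h0 h1 h2
    rw [leK_iff] at h0 h1 h2
    simp only [Prod.fst_zero, Prod.snd_zero, sub_zero, zero_sub, abs_neg] at h0 h1 h2
    have hx := abs_nonneg x
    have hy := abs_nonneg y
    have h1x := le_abs_self (1 - x)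
    have h2y := le_abs_self (1 - y)
    have hxs := le_abs_self x
    have hys := le_abs_self y
    have hy0 : y = 0 := by
      have : |y| ≤ 0 := by linarith
      exact abs_nonpos_iff.mp this
    subst hy0
    simp only [abs_zero, sub_zero, abs_one] at h0 h1 h2
    have hx0 : x = 0 := by
      have : |x| ≤ 0 := by linarith
      exact abs_nonpos_iff.mp this
    subst hx0
    simp only [abs_zero, zero_add, sub_zero, abs_one] at h0 h2
    have hz0 : z = 0 := by linarith
    simp [hz0]
  refine ⟨?_, ?_, ?_, ?_, ?_, ?_, hdisj, ?_⟩
  · simp [Prod.ext_iff]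
  · simp [Prod.ext_iff]
  · rw [leK_iff]; norm_num
  · rw [leK_iff]; norm_num
  · rw [leK_iff]; norm_num
  · rw [leK_iff]; norm_num
  · rintro ⟨-, hno⟩
    exact hno ⟨(1,0,1), (0,1,1), by simp [Prod.ext_iff], by simp [Prod.ext_iff],
      by rw [leK_iff]; norm_num, by rw [leK_iff]; norm_num,
      by rw [leK_iff]; norm_num, by rw [leK_iff]; norm_num, hdisj⟩
end

section
/- Let V be a finite-dimensional Archimedean partially ordered vector space whose positive cone V_p is an M-cone, and let F be a face of V_p. Then for every nonzero x ∈ F there exists a D-discrete element z with 0 ≤ z ≤ x. In particular, taking F = V_p, every nonzero positive element dominates some D-discrete element. -/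
variable {V : Type*} [AddCommGroup V] [PartialOrder V]
  [CovariantClass V V (· + ·) (· ≤ ·)] [Module ℝ V] [PosSMulMono ℝ V]

private def coneOf (x : V) : Set V := {w | 0 ≤ w ∧ ∃ t : ℝ, 0 ≤ t ∧ w ≤ t • x}

private lemma coneOf_mono {x y : V} (h : x ≤ y) : coneOf x ⊆ coneOf y := by
  rintro w ⟨hw, t, ht, hwt⟩
  exact ⟨hw, t, ht, hwt.trans (smul_le_smul_of_nonneg_left h ht)⟩

private lemma mem_coneOf_self {x : V} (hx : 0 ≤ x) : x ∈ coneOf x :=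
  ⟨hx, 1, zero_le_one, by simp⟩

private lemma coneOf_sub {a : V} (ha : 0 ≤ a) {v : V}
    (hv : v ∈ Submodule.span ℝ (coneOf a)) :
    ∃ p ∈ coneOf a, ∃ q ∈ coneOf a, v = p - q := by
  induction hv using Submodule.span_induction with
  | mem w hw => exact ⟨w, hw, 0, ⟨le_refl 0, 0, le_refl 0, by simp⟩, by simp⟩
  | zero => exact ⟨0, ⟨le_refl 0, 0, le_refl 0, by simp⟩, 0, ⟨le_refl 0, 0, le_refl 0, by simp⟩, by simp⟩
  | add v w _ _ ihv ihw =>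
    obtain ⟨p1, ⟨hp1, t1, ht1, hpt1⟩, q1, ⟨hq1, s1, hs1, hqs1⟩, rfl⟩ := ihv
    obtain ⟨p2, ⟨hp2, t2, ht2, hpt2⟩, q2, ⟨hq2, s2, hs2, hqs2⟩, rfl⟩ := ihw
    refine ⟨p1 + p2, ⟨add_nonneg hp1 hp2, t1 + t2, by linarith, ?_⟩,
      q1 + q2, ⟨add_nonneg hq1 hq2, s1 + s2, by linarith, ?_⟩, by abel⟩
    · calc p1 + p2 ≤ t1 • a + t2 • a := add_le_add hpt1 hpt2
        _ = (t1 + t2) • a := (add_smul t1 t2 a).symm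
    · calc q1 + q2 ≤ s1 • a + s2 • a := add_le_add hqs1 hqs2
        _ = (s1 + s2) • a := (add_smul s1 s2 a).symm
  | smul c v _ ihv =>
    obtain ⟨p, ⟨hp, t, ht, hpt⟩, q, ⟨hq, s, hs, hqs⟩, rfl⟩ := ihv
    rcases le_total 0 c with hc | hc
    · refine ⟨c • p, ⟨smul_nonneg hc hp, c * t, mul_nonneg hc ht, ?_⟩,
        c • q, ⟨smul_nonneg hc hq, c * s, mul_nonneg hc hs, ?_⟩, by
          rw [smul_sub]⟩
      · calc c • p ≤ c • (t • a) := smul_le_smul_of_nonneg_left hpt hc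
          _ = (c * t) • a := smul_smul c t a
      · calc c • q ≤ c • (s • a) := smul_le_smul_of_nonneg_left hqs hc
          _ = (c * s) • a := smul_smul c s a
    · have hc' : 0 ≤ -c := by linarith
      refine ⟨(-c) • q, ⟨smul_nonneg hc' hq, (-c) * s, mul_nonneg hc' hs, ?_⟩,
        (-c) • p, ⟨smul_nonneg hc' hp, (-c) * t, mul_nonneg hc' ht, ?_⟩, by
          rw [neg_smul, neg_smul, smul_sub]; abel⟩
      · calc (-c) • q ≤ (-c) • (s • a) := smul_le_smul_of_nonneg_left hqs hc'
          _ = ((-c) * s) • a := smul_smul (-c) s a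
      · calc (-c) • p ≤ (-c) • (t • a) := smul_le_smul_of_nonneg_left hpt hc'
          _ = ((-c) * t) • a := smul_smul (-c) t a

/-- If `a` and `b` are nonzero, D-disjoint, then `b` is not in the span of the face
generated by `a`. -/
private lemma not_mem_span {a b : V} (ha : 0 ≤ a) (hb : 0 ≤ b) (hbne : b ≠ 0)
    (hdisj : Set.Icc 0 a ∩ Set.Icc 0 b = {0}) :
    b ∉ Submodule.span ℝ (coneOf a) := by
  intro hmem
  obtain ⟨p, ⟨hp0, t, ht, hpt⟩, q, ⟨hq0, _⟩, rfl⟩ := coneOf_sub ha hmem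
  have hble : p - q ≤ t • a := le_trans (by simpa using sub_le_sub_left hq0 p) hpt
  set b := p - q
  have hbb : (0 : V) ≤ b := hb
  rcases eq_or_lt_of_le ht with h0 | ht0
  · have : b ≤ 0 := by simpa [← h0] using hble
    exact hbne (le_antisymm this hbb)
  · set s : ℝ := min 1 t⁻¹ with hs
    have hspos : 0 < s := lt_min one_pos (inv_pos.mpr ht0)
    have hs1 : s ≤ 1 := min_le_left _ _
    have hst : s * t ≤ 1 := by
      have : s ≤ t⁻¹ := min_le_right _ _
      calc s * t ≤ t⁻¹ * t := mul_le_mul_of_nonneg_right this (le_of_lt ht0)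
        _ = 1 := inv_mul_cancel₀ (ne_of_gt ht0)
    have hw0 : 0 ≤ s • b := smul_nonneg hspos.le hbb
    have hwb : s • b ≤ b := by
      have h : 0 ≤ (1 - s) • b := smul_nonneg (by linarith) hbb
      rw [sub_smul, one_smul, sub_nonneg] at h
      exact h
    have hwa : s • b ≤ a := by
      have h1 : s • b ≤ s • (t • a) := smul_le_smul_of_nonneg_left hble hspos.le
      have h2 : s • (t • a) = (s * t) • a := smul_smul s t a
      have h3 : (s * t) • a ≤ a := by
        have h : 0 ≤ (1 - s * t) • a := smul_nonneg (by linarith) ha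
        rw [sub_smul, one_smul, sub_nonneg] at h
        exact h
      exact h1.trans (h2 ▸ h3)
    have : s • b ∈ Set.Icc 0 a ∩ Set.Icc 0 b := ⟨⟨hw0, hwa⟩, ⟨hw0, hwb⟩⟩
    rw [hdisj] at this
    exact smul_ne_zero (ne_of_gt hspos) hbne this

private lemma aux [FiniteDimensional ℝ V] :
    ∀ n : ℕ, ∀ x : V, 0 ≤ x → x ≠ 0 →
      Module.finrank ℝ (Submodule.span ℝ (coneOf x)) = n →
      ∃ z : V, 0 ≤ z ∧ z ≤ x ∧ z ≠ 0 ∧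
        ¬∃ a b : V, a ≠ 0 ∧ b ≠ 0 ∧ 0 ≤ a ∧ a ≤ z ∧ 0 ≤ b ∧ b ≤ z ∧
          Set.Icc 0 a ∩ Set.Icc 0 b = {0} := by
  intro n
  induction n using Nat.strong_induction_on with
  | _ n ih =>
    intro x hx hxne hrank
    by_cases hdisc : ∃ a b : V, a ≠ 0 ∧ b ≠ 0 ∧ 0 ≤ a ∧ a ≤ x ∧ 0 ≤ b ∧ b ≤ x ∧
        Set.Icc 0 a ∩ Set.Icc 0 b = {0}
    · obtain ⟨a, b, hane, hbne, ha0, hax, hb0, hbx, hdisj⟩ := hdisc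
      have hlt : Submodule.span ℝ (coneOf a) < Submodule.span ℝ (coneOf x) := by
        refine lt_of_le_of_ne (Submodule.span_mono (coneOf_mono hax)) ?_
        intro heq
        exact not_mem_span ha0 hb0 hbne hdisj
          (heq ▸ Submodule.subset_span (⟨hb0, 1, zero_le_one, by simpa⟩ : b ∈ coneOf x))
      have hrlt : Module.finrank ℝ (Submodule.span ℝ (coneOf a)) < n :=
        hrank ▸ Submodule.finrank_lt_finrank_of_lt hlt
      obtain ⟨z, hz0, hza, hzne, hznd⟩ :=
        ih _ hrlt a ha0 hane rfl
      exact ⟨z, hz0, hza.trans hax, hzne, hznd⟩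
    · exact ⟨x, hx, le_refl x, hxne, hdisc⟩

theorem stmt19 [FiniteDimensional ℝ V]
    (harch : ∀ x y : V, (∀ n : ℕ, n • x ≤ y) → x ≤ 0)
    (hM : ∀ u v : V, ∃ m, m ∈ lowerBounds ({u, v} : Set V) ∧
      ∀ s ∈ lowerBounds ({u, v} : Set V), m ≤ s → s = m)
    (F : Set V) (hFpos : ∀ v ∈ F, 0 ≤ v)
    (hFadd : ∀ u ∈ F, ∀ v ∈ F, u + v ∈ F)
    (hFsmul : ∀ c : ℝ, 0 ≤ c → ∀ v ∈ F, c • v ∈ F)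
    (hFconv : ∀ w z : V, 0 ≤ w → w ≤ z → z ∈ F → w ∈ F) :
    ∀ x ∈ F, x ≠ 0 → ∃ z : V, 0 ≤ z ∧ z ≤ x ∧ z ≠ 0 ∧
      ¬∃ a b : V, a ≠ 0 ∧ b ≠ 0 ∧ 0 ≤ a ∧ a ≤ z ∧ 0 ≤ b ∧ b ≤ z ∧
        Set.Icc 0 a ∩ Set.Icc 0 b = {0} := by
  intro x hxF hxne
  exact aux _ x (hFpos x hxF) hxne rfl
end
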